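/- arXiv:2008.00505 — 2 statements merged into one kernel-verified Lean document; each statement's English description precedes it below -/
import Mathlib

section
/- For every natural number n ≥ 2 and every ε > 0, the first component of the Lie bracket [fₙ, fₙ₊₁], namely ε⁴(2n²+6n+3)/(4n²+8n+3), is strictly positive; hence the vectors fₙ(p), fₙ₊₁(p), and [fₙ, fₙ₊₁](p) span ℝ³ at every point p ∈ ℝ³. -/
/-- Lie bracket of vector fields on ℝ³ (as ℝ × ℝ × ℝ). -/
noncomputable def lieBracketVF (X Y : ℝ × ℝ × ℝ → ℝ × ℝ × ℝ) (p : ℝ × ℝ × ℝ) :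
    ℝ × ℝ × ℝ :=
  fderiv ℝ Y p (X p) - fderiv ℝ X p (Y p)

/-! The fields `fₙ` and `fₙ₊₁` are the shear fields `(c z, 1, 0)` and `(d y, 0, 1)`, whose bracket is
the constant field `(d - c, 0, 0)`. Here `d - c = ε²(2n² - 2n - 1)/((2n+1)(2n+3)) > 0`, so the two
fields and their bracket span ℝ³ at every point. -/

open ContinuousLinearMap

theorem lieBracketVF_eq_of_hasFDerivAt {X Y : ℝ × ℝ × ℝ → ℝ × ℝ × ℝ}
    {A B : (ℝ × ℝ × ℝ) →L[ℝ] ℝ × ℝ × ℝ} {p : ℝ × ℝ × ℝ}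
    (hX : HasFDerivAt X A p) (hY : HasFDerivAt Y B p) :
    lieBracketVF X Y p = B (X p) - A (Y p) := by
  rw [lieBracketVF, hX.fderiv, hY.fderiv]

theorem hasFDerivAt_shear_z (c : ℝ) (v : ℝ × ℝ) (p : ℝ × ℝ × ℝ) :
    HasFDerivAt (fun q : ℝ × ℝ × ℝ => (c * q.2.2, v))
      ((c • (snd ℝ ℝ ℝ).comp (snd ℝ ℝ (ℝ × ℝ))).prod 0) p :=
  (hasFDerivAt_snd.snd.const_mul c).prodMk (hasFDerivAt_const v p)

theorem hasFDerivAt_shear_y (d : ℝ) (v : ℝ × ℝ) (p : ℝ × ℝ × ℝ) :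
    HasFDerivAt (fun q : ℝ × ℝ × ℝ => (d * q.2.1, v))
      ((d • (fst ℝ ℝ ℝ).comp (snd ℝ ℝ (ℝ × ℝ))).prod 0) p :=
  (hasFDerivAt_snd.fst.const_mul d).prodMk (hasFDerivAt_const v p)

theorem lieBracketVF_shear (c d : ℝ) (p : ℝ × ℝ × ℝ) :
    lieBracketVF (fun q => (c * q.2.2, 1, 0)) (fun q => (d * q.2.1, 0, 1)) p = (d - c, 0, 0) := by
  rw [lieBracketVF_eq_of_hasFDerivAt (hasFDerivAt_shear_z c _ p) (hasFDerivAt_shear_y d _ p)]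
  simp [Prod.ext_iff]

theorem span_shear_triple_eq_top {K : Type*} [Field K] (a b d : K) (hd : d ≠ 0) :
    Submodule.span K ({(a, 1, 0), (b, 0, 1), (d, 0, 0)} : Set (K × K × K)) = ⊤ := by
  refine Submodule.eq_top_iff'.mpr fun x => ?_
  have hx : x = x.2.1 • (a, (1 : K), (0 : K)) + x.2.2 • (b, (0 : K), (1 : K))
      + ((x.1 - x.2.1 * a - x.2.2 * b) / d) • (d, (0 : K), (0 : K)) := by
    ext
    · simp only [Prod.fst_add, Prod.smul_fst, smul_eq_mul]
      field_simp
      ring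
    all_goals simp
  rw [hx]
  refine add_mem (add_mem (Submodule.smul_mem _ _ ?_) (Submodule.smul_mem _ _ ?_))
    (Submodule.smul_mem _ _ ?_) <;> exact Submodule.subset_span (by simp)

/-- for every `n ≥ 2` and `ε > 0`, the first component of
`[fₙ, fₙ₊₁]`, namely `ε⁴(2n²+6n+3)/(4n²+8n+3)`, is strictly positive; hence
`fₙ(p)`, `fₙ₊₁(p)` and `[fₙ, fₙ₊₁](p)` span ℝ³ at every point `p`. -/
theorem radial_swimmer_bracket_pos_and_span (ε : ℝ) (hε : 0 < ε) (n : ℕ) (hn : 2 ≤ n)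
    (f fsucc : ℝ × ℝ × ℝ → ℝ × ℝ × ℝ)
    (hf : ∀ p : ℝ × ℝ × ℝ,
      f p = (-(ε ^ 2) * ((n : ℝ) ^ 2 - 4 * n - 2) * p.2.2 /
        ((2 * (n : ℝ) + 1) * (2 * (n : ℝ) + 3)), 1, 0))
    (hfsucc : ∀ p : ℝ × ℝ × ℝ,
      fsucc p = (ε ^ 2 * ((n : ℝ) + 1) ^ 2 * p.2.1 /
        ((2 * (n : ℝ) + 1) * (2 * (n : ℝ) + 3)), 0, 1)) :
    0 < ε ^ 4 * (2 * (n : ℝ) ^ 2 + 6 * n + 3) / (4 * (n : ℝ) ^ 2 + 8 * n + 3) ∧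
    ∀ p : ℝ × ℝ × ℝ,
      Submodule.span ℝ ({f p, fsucc p, lieBracketVF f fsucc p} :
        Set (ℝ × ℝ × ℝ)) = ⊤ := by
  have hn' : (2 : ℝ) ≤ n := by exact_mod_cast hn
  set D : ℝ := (2 * (n : ℝ) + 1) * (2 * (n : ℝ) + 3)
  set c : ℝ := -(ε ^ 2) * ((n : ℝ) ^ 2 - 4 * n - 2) / D
  set d : ℝ := ε ^ 2 * ((n : ℝ) + 1) ^ 2 / D
  have hf' : f = fun q => (c * q.2.2, 1, 0) := funext fun q => by rw [hf, mul_div_right_comm]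
  have hfsucc' : fsucc = fun q => (d * q.2.1, 0, 1) := funext fun q => by rw [hfsucc, mul_div_right_comm]
  have hdc : d - c = ε ^ 2 * (2 * (n : ℝ) ^ 2 - 2 * n - 1) / D := by ring
  have hdc_pos : 0 < d - c := by
    rw [hdc]
    have : 0 < 2 * (n : ℝ) ^ 2 - 2 * n - 1 := by nlinarith
    positivity
  refine ⟨by positivity, fun p => ?_⟩
  rw [hf', hfsucc', lieBracketVF_shear]
  exact span_shear_triple_eq_top _ _ _ hdc_pos.ne'
end

section
/- For every ε > 0 and n ≥ 2, the distribution spanned by the vector fields fₙ and fₙ₊₁ of the radial swimmer is bracket-generating on all of ℝ³ (its Lie algebra evaluated at each point is all of ℝ³); hence by the Chow–Rashevskii theorem the system is controllable: any two points of ℝ³ can be joined by a horizontal path. -/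
open Polynomial

def shearFieldA (α : ℝ) (p : ℝ × ℝ × ℝ) : ℝ × ℝ × ℝ := (α * p.2.2, 1, 0)

def shearFieldB (β : ℝ) (p : ℝ × ℝ × ℝ) : ℝ × ℝ × ℝ := (β * p.2.1, 0, 1)

theorem fderiv_shearFieldA_apply (α : ℝ) (p v : ℝ × ℝ × ℝ) :
    fderiv ℝ (shearFieldA α) p v = (α * v.2.2, 0, 0) := by
  have h : HasFDerivAt (shearFieldA α) _ p :=
    ((hasFDerivAt_snd (𝕜 := ℝ) (p := p)).snd.const_mul α).prodMk
      (hasFDerivAt_const ((1, 0) : ℝ × ℝ) p)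
  simp [h.fderiv, Prod.zero_eq_mk]

theorem fderiv_shearFieldB_apply (β : ℝ) (p v : ℝ × ℝ × ℝ) :
    fderiv ℝ (shearFieldB β) p v = (β * v.2.1, 0, 0) := by
  have h : HasFDerivAt (shearFieldB β) _ p :=
    ((hasFDerivAt_snd (𝕜 := ℝ) (p := p)).fst.const_mul β).prodMk
      (hasFDerivAt_const ((0, 1) : ℝ × ℝ) p)
  simp [h.fderiv, Prod.zero_eq_mk]

theorem lieBracketVF_shearFieldA_shearFieldB (α β : ℝ) (p : ℝ × ℝ × ℝ) :
    lieBracketVF (shearFieldA α) (shearFieldB β) p = (β - α, 0, 0) := by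
  rw [lieBracketVF, fderiv_shearFieldA_apply, fderiv_shearFieldB_apply]
  simp [shearFieldA, shearFieldB, Prod.zero_eq_mk]

theorem span_triple_eq_top_of_ne_zero (a b c : ℝ) (hc : c ≠ 0) :
    Submodule.span ℝ {((a, 1, 0) : ℝ × ℝ × ℝ), (b, 0, 1), (c, 0, 0)} = ⊤ := by
  refine eq_top_iff.mpr fun ⟨x, y, z⟩ _ => ?_
  have hv : ((x, y, z) : ℝ × ℝ × ℝ) =
      y • ((a, 1, 0) : ℝ × ℝ × ℝ) + z • (b, 0, 1) + ((x - y * a - z * b) / c) • (c, 0, 0) := by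
    simp only [Prod.smul_mk, smul_eq_mul, Prod.mk_add_mk, mul_one, mul_zero, add_zero, zero_add,
      div_mul_cancel₀ _ hc]
    ext <;> ring
  rw [hv]
  refine add_mem (add_mem ?_ ?_) ?_ <;>
    exact Submodule.smul_mem _ _ (Submodule.subset_span (by simp))

theorem span_shearFields_lieBracketVF_eq_top {α β : ℝ} (hαβ : α ≠ β) (p : ℝ × ℝ × ℝ) :
    Submodule.span ℝ {shearFieldA α p, shearFieldB β p,
      lieBracketVF (shearFieldA α) (shearFieldB β) p} = ⊤ := by
  rw [lieBracketVF_shearFieldA_shearFieldB]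
  exact span_triple_eq_top_of_ne_zero _ _ _ (sub_ne_zero.mpr hαβ.symm)

theorem hasDerivAt_shear_lift {α β t u v : ℝ} {w y z : ℝ → ℝ} (hy : HasDerivAt y u t)
    (hz : HasDerivAt z v t) (hw : HasDerivAt w ((β - α) * y t * v) t) :
    HasDerivAt (fun s => (w s + α * y s * z s, y s, z s))
      (u • shearFieldA α (w t + α * y t * z t, y t, z t) +
        v • shearFieldB β (w t + α * y t * z t, y t, z t)) t := by
  refine ((hw.add ((hy.const_mul α).mul hz)).prodMk (hy.prodMk hz)).congr_deriv ?_
  simp only [shearFieldA, shearFieldB, Prod.smul_mk, smul_eq_mul, Prod.mk_add_mk, Prod.mk.injEq]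
  refine ⟨by ring, by ring, by ring⟩

theorem exists_horizontal_path_shearFields {α β : ℝ} (hαβ : α ≠ β) (p q : ℝ × ℝ × ℝ) :
    ∃ (γ : ℝ → ℝ × ℝ × ℝ) (u₁ u₂ : ℝ → ℝ), γ 0 = p ∧ γ 1 = q ∧
      ∀ t, HasDerivAt γ (u₁ t • shearFieldA α (γ t) + u₂ t • shearFieldB β (γ t)) t := by
  obtain ⟨x₀, y₀, z₀⟩ := p
  obtain ⟨x₁, y₁, z₁⟩ := q
  have hc : β - α ≠ 0 := sub_ne_zero.mpr hαβ.symm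
  set w₀ := x₀ - α * y₀ * z₀
  set w₁ := x₁ - α * y₁ * z₁
  set dy := y₁ - y₀
  set dz := z₁ - z₀
  -- `W` is an antiderivative of `(β - α) Y Z'`. The loop `s t (1 - t) (1 - 2t)` in `Z` changes
  -- `W(1)` by `-(β - α) s / 30` whatever the endpoints, and `s` is tuned to reach `w₁`.
  set s := dz * (30 * y₀ + 15 * dy + 5) - 30 * (w₁ - w₀) / (β - α)
  set Y : ℝ[X] := C y₀ + C dy * X + X * (1 - X)
  set Z : ℝ[X] := C z₀ + C dz * X + C s * (X * (1 - X) * (1 - 2 * X))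
  set W : ℝ[X] := C w₀ + C ((β - α) / 30) *
    (C dz * (30 * C y₀ * X + 15 * C (dy + 1) * X ^ 2 - 10 * X ^ 3) +
      C s * (30 * C y₀ * X + 15 * C (dy + 1 - 6 * y₀) * X ^ 2 +
        10 * C (6 * y₀ - 6 * dy - 7) * X ^ 3 + 45 * C (dy + 2) * X ^ 4 - 36 * X ^ 5))
  have hW (t : ℝ) : W.derivative.eval t = (β - α) * Y.eval t * Z.derivative.eval t := by
    simp only [W, Y, Z, derivative_add, derivative_sub, derivative_mul, derivative_C,
      derivative_X, derivative_X_pow, derivative_ofNat, derivative_one, eval_add, eval_sub,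
      eval_mul, eval_C, eval_X, eval_pow, eval_ofNat, eval_one, eval_zero]
    ring
  refine ⟨fun t => (W.eval t + α * Y.eval t * Z.eval t, Y.eval t, Z.eval t),
    fun t => Y.derivative.eval t, fun t => Z.derivative.eval t, ?_, ?_,
    fun t => hasDerivAt_shear_lift (Y.hasDerivAt t) (Z.hasDerivAt t) (hW t ▸ W.hasDerivAt t)⟩
  · simp [W, Y, Z, w₀]
  · simp only [W, Y, Z, s, w₀, w₁, dy, dz, eval_add, eval_sub, eval_mul, eval_C, eval_X,
      eval_pow, eval_ofNat, eval_one, Prod.mk.injEq]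
    refine ⟨?_, by ring, by ring⟩
    field_simp
    ring

theorem radial_swimmer_coeff_ne {ε : ℝ} (hε : ε ≠ 0) (n : ℕ) :
    -(ε ^ 2) * ((n : ℝ) ^ 2 - 4 * n - 2) / ((2 * (n : ℝ) + 1) * (2 * (n : ℝ) + 3)) ≠
      ε ^ 2 * ((n : ℝ) + 1) ^ 2 / ((2 * (n : ℝ) + 1) * (2 * (n : ℝ) + 3)) := by
  have hD : (2 * (n : ℝ) + 1) * (2 * (n : ℝ) + 3) ≠ 0 := by positivity
  have hodd : 2 * (n : ℝ) ^ 2 - 2 * n - 1 ≠ 0 := by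
    exact_mod_cast (by omega : 2 * (n : ℤ) ^ 2 - 2 * n - 1 ≠ 0)
  rw [Ne, div_left_inj' hD]
  intro h
  exact mul_ne_zero (pow_ne_zero 2 hε) hodd (by linear_combination -h)

theorem radial_swimmer_chow_controllable_general (ε : ℝ) (hε : 0 < ε) (n : ℕ)
    (f fsucc : ℝ × ℝ × ℝ → ℝ × ℝ × ℝ)
    (hf : ∀ p : ℝ × ℝ × ℝ,
      f p = (-(ε ^ 2) * ((n : ℝ) ^ 2 - 4 * n - 2) * p.2.2 /
        ((2 * (n : ℝ) + 1) * (2 * (n : ℝ) + 3)), 1, 0))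
    (hfsucc : ∀ p : ℝ × ℝ × ℝ,
      fsucc p = (ε ^ 2 * ((n : ℝ) + 1) ^ 2 * p.2.1 /
        ((2 * (n : ℝ) + 1) * (2 * (n : ℝ) + 3)), 0, 1)) :
    (∀ p : ℝ × ℝ × ℝ,
      Submodule.span ℝ ({f p, fsucc p, lieBracketVF f fsucc p} :
        Set (ℝ × ℝ × ℝ)) = ⊤) ∧
    ∀ p q : ℝ × ℝ × ℝ, ∃ (γ : ℝ → ℝ × ℝ × ℝ) (u₁ u₂ : ℝ → ℝ),
      γ 0 = p ∧ γ 1 = q ∧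
      ∀ t ∈ Set.Icc (0:ℝ) 1,
        HasDerivAt γ (u₁ t • f (γ t) + u₂ t • fsucc (γ t)) t := by
  set α := -(ε ^ 2) * ((n : ℝ) ^ 2 - 4 * n - 2) / ((2 * (n : ℝ) + 1) * (2 * (n : ℝ) + 3))
  set β := ε ^ 2 * ((n : ℝ) + 1) ^ 2 / ((2 * (n : ℝ) + 1) * (2 * (n : ℝ) + 3))
  have hf' : f = shearFieldA α := funext fun p => by rw [hf, shearFieldA]; congr 1; ring
  have hfsucc' : fsucc = shearFieldB β := funext fun p => by rw [hfsucc, shearFieldB]; congr 1; ring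
  have hαβ : α ≠ β := radial_swimmer_coeff_ne hε.ne' n
  subst hf' hfsucc'
  refine ⟨span_shearFields_lieBracketVF_eq_top hαβ, fun p q => ?_⟩
  obtain ⟨γ, u₁, u₂, h₀, h₁, hγ⟩ := exists_horizontal_path_shearFields hαβ p q
  exact ⟨γ, u₁, u₂, h₀, h₁, fun t _ => hγ t⟩

/-- for every `ε > 0` and `n ≥ 2`, the distribution spanned by the
radial swimmer's vector fields `fₙ, fₙ₊₁` is bracket-generating on ℝ³ (adding
one bracket already spans ℝ³ at each point); hence by Chow–Rashevskii the
system is controllable: any two points of ℝ³ are joined by a horizontal path,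
i.e. a C¹ curve whose velocity is everywhere a combination
`u₁(t)·fₙ + u₂(t)·fₙ₊₁`. -/
theorem radial_swimmer_chow_controllable (ε : ℝ) (hε : 0 < ε) (n : ℕ)
    (hn : 2 ≤ n)
    (f fsucc : ℝ × ℝ × ℝ → ℝ × ℝ × ℝ)
    (hf : ∀ p : ℝ × ℝ × ℝ,
      f p = (-(ε ^ 2) * ((n : ℝ) ^ 2 - 4 * n - 2) * p.2.2 /
        ((2 * (n : ℝ) + 1) * (2 * (n : ℝ) + 3)), 1, 0))
    (hfsucc : ∀ p : ℝ × ℝ × ℝ,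
      fsucc p = (ε ^ 2 * ((n : ℝ) + 1) ^ 2 * p.2.1 /
        ((2 * (n : ℝ) + 1) * (2 * (n : ℝ) + 3)), 0, 1)) :
    (∀ p : ℝ × ℝ × ℝ,
      Submodule.span ℝ ({f p, fsucc p, lieBracketVF f fsucc p} :
        Set (ℝ × ℝ × ℝ)) = ⊤) ∧
    ∀ p q : ℝ × ℝ × ℝ, ∃ (γ : ℝ → ℝ × ℝ × ℝ) (u₁ u₂ : ℝ → ℝ),
      γ 0 = p ∧ γ 1 = q ∧
      ∀ t ∈ Set.Icc (0:ℝ) 1,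
        HasDerivAt γ (u₁ t • f (γ t) + u₂ t • fsucc (γ t)) t :=
  radial_swimmer_chow_controllable_general ε hε n f fsucc hf hfsucc
end
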